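/- The decoding distance d(S₁,S₂) = max(|S₁|,|S₂|) − x(S₁,S₂) defines a metric on the set of all finite strings (lists) over an alphabet α: it is non-negative, vanishes exactly on equal pairs, is symmetric, and satisfies the triangle inequality; hence List α carries a metric space structure with this distance. -/

import Mathlib

/-- Length of the longest common prefix of two lists. -/
def lcpLength {α : Type*} [DecidableEq α] : List α → List α → ℕ
  | a :: as, b :: bs => if a = b then lcpLength as bs + 1 else 0
  | _, _ => 0

/-- `lcsLength S₁ S₂` is the length of the longest common suffix of `S₁` and `S₂`. -/
def lcsLength {α : Type*} [DecidableEq α] (S₁ S₂ : List α) : ℕ :=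
  lcpLength S₁.reverse S₂.reverse

/-- The decoding distance `d(S₁,S₂) = max(|S₁|,|S₂|) − x(S₁,S₂)`, where
`x(S₁,S₂)` is the length of the longest common suffix of `S₁` and `S₂`. -/
def decodingDist {α : Type*} [DecidableEq α] (S₁ S₂ : List α) : ℕ :=
  max S₁.length S₂.length - lcsLength S₁ S₂

/-!
The common-suffix length `x` is ultrametric-like: `min (x a b) (x b c) ≤ x a c`, because both
shared suffixes are suffixes of `b`, so the shorter one is also shared by `a` and `c`. Together
with `x a b ≤ min |a| |b|` this reduces the triangle inequality to linear arithmetic on lengths.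
Finally `d a b = 0` means `x a b ≥ max |a| |b|`, so each of `a`, `b` is a suffix of the other.
-/

section

variable {α : Type*} [DecidableEq α]

theorem lcpLength_comm : ∀ a b : List α, lcpLength a b = lcpLength b a
  | [], [] | [], _ :: _ | _ :: _, [] => rfl
  | x :: xs, y :: ys => by
    by_cases h : x = y
    · simp [lcpLength, h, lcpLength_comm xs ys]
    · simp [lcpLength, h, Ne.symm h]

theorem lcpLength_le_length_left : ∀ a b : List α, lcpLength a b ≤ a.length
  | [], _ | _ :: _, [] => by simp [lcpLength]
  | x :: xs, y :: ys => by
    by_cases h : x = y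
    · simpa [lcpLength, h] using lcpLength_le_length_left xs ys
    · simp [lcpLength, h]

theorem lcpLength_le_length_right (a b : List α) : lcpLength a b ≤ b.length :=
  lcpLength_comm a b ▸ lcpLength_le_length_left b a

theorem lcpLength_self : ∀ a : List α, lcpLength a a = a.length
  | [] => rfl
  | x :: xs => by simp [lcpLength, lcpLength_self xs]

theorem eq_of_length_le_lcpLength : ∀ {a b : List α},
    a.length ≤ lcpLength a b → b.length ≤ lcpLength a b → a = b
  | [], [], _, _ => rfl
  | [], _ :: _, _, h | _ :: _, [], h, _ => by simp [lcpLength] at h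
  | x :: xs, y :: ys, ha, hb => by
    by_cases h : x = y
    · simp only [lcpLength, h, if_true, List.length_cons, Nat.add_le_add_iff_right] at ha hb
      rw [h, eq_of_length_le_lcpLength ha hb]
    · simp [lcpLength, h] at ha

theorem min_lcpLength_le_lcpLength : ∀ a b c : List α,
    min (lcpLength a b) (lcpLength b c) ≤ lcpLength a c
  | [], _, _ | _ :: _, [], _ | _ :: _, _ :: _, [] => by simp [lcpLength]
  | x :: xs, y :: ys, z :: zs => by
    by_cases hxy : x = y
    · by_cases hyz : y = z
      · have ih := min_lcpLength_le_lcpLength xs ys zs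
        simp only [lcpLength, hxy, hyz, if_true]
        omega
      · simp [lcpLength, hyz]
    · simp [lcpLength, hxy]

theorem lcsLength_comm (a b : List α) : lcsLength a b = lcsLength b a :=
  lcpLength_comm _ _

theorem lcsLength_le_length_left (a b : List α) : lcsLength a b ≤ a.length := by
  simpa [lcsLength] using lcpLength_le_length_left a.reverse b.reverse

theorem lcsLength_le_length_right (a b : List α) : lcsLength a b ≤ b.length := by
  simpa [lcsLength] using lcpLength_le_length_right a.reverse b.reverse

theorem lcsLength_self (a : List α) : lcsLength a a = a.length := by
  simp [lcsLength, lcpLength_self]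

theorem eq_of_length_le_lcsLength {a b : List α}
    (ha : a.length ≤ lcsLength a b) (hb : b.length ≤ lcsLength a b) : a = b :=
  List.reverse_injective <| eq_of_length_le_lcpLength (by simpa [lcsLength] using ha)
    (by simpa [lcsLength] using hb)

theorem min_lcsLength_le_lcsLength (a b c : List α) :
    min (lcsLength a b) (lcsLength b c) ≤ lcsLength a c :=
  min_lcpLength_le_lcpLength _ _ _

theorem decodingDist_comm (a b : List α) : decodingDist a b = decodingDist b a := by
  rw [decodingDist, decodingDist, lcsLength_comm, max_comm]

theorem decodingDist_eq_zero_iff {a b : List α} : decodingDist a b = 0 ↔ a = b := by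
  refine ⟨fun h => ?_, fun h => by simp [h, decodingDist, lcsLength_self]⟩
  rw [decodingDist, Nat.sub_eq_zero_iff_le, max_le_iff] at h
  exact eq_of_length_le_lcsLength h.1 h.2

theorem decodingDist_triangle (a b c : List α) :
    decodingDist a c ≤ decodingDist a b + decodingDist b c := by
  have hmin := min_lcsLength_le_lcsLength a b c
  have hab := lcsLength_le_length_left a b
  have hba := lcsLength_le_length_right a b
  have hbc := lcsLength_le_length_left b c
  have hcb := lcsLength_le_length_right b c
  simp only [decodingDist]
  omega

variable (α) in
abbrev decodingMetricSpace : MetricSpace (List α) where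
  dist a b := decodingDist a b
  dist_self _ := by simp [decodingDist_eq_zero_iff]
  dist_comm a b := congrArg Nat.cast (decodingDist_comm a b)
  dist_triangle a b c := by exact_mod_cast decodingDist_triangle a b c
  eq_of_dist_eq_zero h := decodingDist_eq_zero_iff.mp (Nat.cast_eq_zero.mp h)

end

/-- The decoding distance defines a metric on the set of finite strings over an
alphabet `α`: it is non-negative, vanishes exactly on equal pairs, is
symmetric, and satisfies the triangle inequality; hence `List α` carries a
metric space structure whose distance function is the decoding distance. -/
theorem decodingDist_metricSpace {α : Type*} [DecidableEq α] :
    (∀ S₁ S₂ : List α, 0 ≤ (decodingDist S₁ S₂ : ℝ)) ∧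
    (∀ S₁ S₂ : List α, decodingDist S₁ S₂ = 0 ↔ S₁ = S₂) ∧
    (∀ S₁ S₂ : List α, decodingDist S₁ S₂ = decodingDist S₂ S₁) ∧
    (∀ S₁ S₂ S₃ : List α,
      decodingDist S₁ S₃ ≤ decodingDist S₁ S₂ + decodingDist S₂ S₃) ∧
    ∃ m : MetricSpace (List α),
      ∀ S₁ S₂ : List α, @dist (List α) m.toDist S₁ S₂ = decodingDist S₁ S₂ :=
  ⟨fun _ _ => Nat.cast_nonneg _, fun _ _ => decodingDist_eq_zero_iff, decodingDist_comm,
    decodingDist_triangle, decodingMetricSpace α, fun _ _ => rfl⟩
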